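/- arXiv:2402.02359 — 6 statements merged into one kernel-verified Lean document; each statement's English description precedes it below -/
import Mathlib

section
/- Let f : ℝ^d → ℝ be twice continuously differentiable with μI ⪯ ∇²f(x) ⪯ LI for all x (where 0 < μ ≤ L) and with L̃-Lipschitz continuous Hessian. Then f is strongly self-concordant with constant M := L̃/μ^{3/2}, i.e., for all x, y, z, w ∈ ℝ^d: ∇²f(y) − ∇²f(x) ⪯ (L̃/μ^{3/2})·‖y − x‖_{∇²f(z)}·∇²f(w). -/
open Matrix

noncomputable section

abbrev Evec (d : ℕ) := EuclideanSpace ℝ (Fin d)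

/-- Gradient vector: coordinates are the partial derivatives. -/
noncomputable def gradE {d : ℕ} (f : Evec d → ℝ) (x : Evec d) : Evec d :=
  WithLp.toLp 2 (fun i => fderiv ℝ f x (EuclideanSpace.single i 1))

/-- Hessian matrix: entries are the second partial derivatives. -/
noncomputable def hessE {d : ℕ} (f : Evec d → ℝ) (x : Evec d) : Matrix (Fin d) (Fin d) ℝ :=
  Matrix.of fun i j =>
    iteratedFDeriv ℝ 2 f x ![EuclideanSpace.single i 1, EuclideanSpace.single j 1]

/-- Spectral norm of a matrix (operator norm on Euclidean space). -/
noncomputable def specNorm {d : ℕ} (A : Matrix (Fin d) (Fin d) ℝ) : ℝ :=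
  ‖Matrix.toEuclideanCLM (𝕜 := ℝ) A‖

/-- ‖v‖_A = √(vᵀ A v). -/
noncomputable def anorm {d : ℕ} (A : Matrix (Fin d) (Fin d) ℝ) (v : Evec d) : ℝ :=
  Real.sqrt ((fun i => v i) ⬝ᵥ A.mulVec (fun i => v i))

/-- Matrix-vector product on Euclidean space. -/
noncomputable def mulVecE {d : ℕ} (A : Matrix (Fin d) (Fin d) ℝ) (v : Evec d) : Evec d :=
  WithLp.toLp 2 (fun i => A.mulVec (fun j => v j) i)

/-- The quadratic form is bounded by the spectral norm. -/
lemma quad_le_specNorm {d : ℕ} (A : Matrix (Fin d) (Fin d) ℝ) (v : Evec d) :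
    (fun i => v i) ⬝ᵥ A.mulVec (fun i => v i) ≤ specNorm A * ‖v‖ ^ 2 := by
  have h1 : (fun i => v i) ⬝ᵥ A.mulVec (fun i => v i)
      = inner ℝ v ((toEuclideanCLM (𝕜 := ℝ) A) v) := by
    rw [PiLp.inner_apply]
    simp [dotProduct]
    exact Finset.sum_congr rfl fun i _ => mul_comm _ _
  rw [h1]
  calc inner ℝ v ((toEuclideanCLM (𝕜 := ℝ) A) v) ≤ ‖v‖ * ‖(toEuclideanCLM (𝕜 := ℝ) A) v‖ :=
        real_inner_le_norm _ _
    _ ≤ ‖v‖ * (‖Matrix.toEuclideanCLM (𝕜 := ℝ) A‖ * ‖v‖) := by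
        gcongr; exact ContinuousLinearMap.le_opNorm _ _
    _ = specNorm A * ‖v‖ ^ 2 := by unfold specNorm; ring

lemma dot_self_eq_norm_sq {d : ℕ} (v : Evec d) :
    (fun i => v i) ⬝ᵥ (fun i => v i) = ‖v‖ ^ 2 := by
  rw [← real_inner_self_eq_norm_sq, PiLp.inner_apply]
  simp [dotProduct, sq]

/-- Lower bound on the quadratic form from `H - μ • 1 ⪰ 0`. -/
lemma quad_lower {d : ℕ} {H : Matrix (Fin d) (Fin d) ℝ} {μ : ℝ}
    (h : (H - μ • (1 : Matrix (Fin d) (Fin d) ℝ)).PosSemidef) (v : Evec d) :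
    μ * ‖v‖ ^ 2 ≤ (fun i => v i) ⬝ᵥ H.mulVec (fun i => v i) := by
  have h2 := h.dotProduct_mulVec_nonneg (fun i => v i)
  simp only [star_trivial, sub_mulVec, dotProduct_sub, smul_mulVec, one_mulVec,
    dotProduct_smul, smul_eq_mul] at h2
  rw [dot_self_eq_norm_sq] at h2
  linarith

/-- strong convexity + Lipschitz Hessian implies strong self-concordance
with constant M = L̃/μ^{3/2}. -/
theorem stmt_1 {d : ℕ} (f : Evec d → ℝ) (μ L Lt : ℝ) (hμ : 0 < μ) (hμL : μ ≤ L)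
    (hC2 : ContDiff ℝ 2 f)
    (hlow : ∀ x : Evec d, (hessE f x - μ • (1 : Matrix (Fin d) (Fin d) ℝ)).PosSemidef)
    (hupp : ∀ x : Evec d, (L • (1 : Matrix (Fin d) (Fin d) ℝ) - hessE f x).PosSemidef)
    (hLip : ∀ x y : Evec d, specNorm (hessE f x - hessE f y) ≤ Lt * ‖x - y‖) :
    ∀ x y z w : Evec d,
      (((Lt / μ ^ ((3 : ℝ) / 2)) * anorm (hessE f z) (y - x)) • hessE f w
        - (hessE f y - hessE f x)).PosSemidef := by
  intro x y z w
  -- Hermitian part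
  have herm : ∀ p : Evec d, (hessE f p).IsHermitian := by
    intro p
    have := (hlow p).1
    have h1 : (μ • (1 : Matrix (Fin d) (Fin d) ℝ)).IsHermitian := by
      simp [Matrix.IsHermitian, conjTranspose_smul]
    simpa using this.add h1
  set s : ℝ := Real.sqrt μ with hs
  have hspos : 0 < s := Real.sqrt_pos.mpr hμ
  have hs2 : s ^ 2 = μ := Real.sq_sqrt hμ.le
  -- μ^{3/2} = μ * s
  have hpow : μ ^ ((3 : ℝ) / 2) = μ * s := by
    rw [show (3 : ℝ) / 2 = 1 + 1 / 2 by norm_num, Real.rpow_add hμ, Real.rpow_one, hs,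
      Real.sqrt_eq_rpow]
  set u : Evec d := y - x with hu
  set a : ℝ := anorm (hessE f z) u with ha
  -- a ≥ 0 and a^2 ≥ μ ‖u‖^2
  have hquadz : μ * ‖u‖ ^ 2 ≤ (fun i => u i) ⬝ᵥ (hessE f z).mulVec (fun i => u i) :=
    quad_lower (hlow z) u
  have ha0 : 0 ≤ a := Real.sqrt_nonneg _
  have ha2 : μ * ‖u‖ ^ 2 ≤ a ^ 2 := by
    rw [ha, anorm, Real.sq_sqrt (le_trans (by positivity) hquadz)]
    exact hquadz
  -- s * ‖u‖ ≤ a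
  have hsu : s * ‖u‖ ≤ a := by
    nlinarith [norm_nonneg u, mul_nonneg hspos.le (norm_nonneg u)]
  refine Matrix.posSemidef_iff_dotProduct_mulVec.mpr ⟨?_, ?_⟩
  · have h1 : ((Lt / μ ^ ((3 : ℝ) / 2) * a) • hessE f w).IsHermitian := by
      rw [Matrix.IsHermitian, conjTranspose_smul, (herm w).eq, star_trivial]
    exact h1.sub ((herm y).sub (herm x))
  · intro vf
    rcases Nat.eq_zero_or_pos d with hd | hd
    · subst hd
      simp [dotProduct]
    have hLt : 0 ≤ Lt := by
      have h := hLip (EuclideanSpace.single ⟨0, hd⟩ 1) 0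
      have hn : ‖(EuclideanSpace.single ⟨0, hd⟩ 1 : Evec d) - 0‖ = 1 := by
        simp [EuclideanSpace.norm_single]
      rw [hn, mul_one] at h
      exact le_trans (norm_nonneg _) h
    set v : Evec d := (WithLp.equiv 2 (Fin d → ℝ)).symm vf with hv
    have hvf : vf = fun i => v i := rfl
    rw [hvf]
    simp only [star_trivial, sub_mulVec, dotProduct_sub, smul_mulVec,
      dotProduct_smul, smul_eq_mul]
    have hquadw : μ * ‖v‖ ^ 2 ≤ (fun i => v i) ⬝ᵥ (hessE f w).mulVec (fun i => v i) :=
      quad_lower (hlow w) v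
    have hq : (fun i => v i) ⬝ᵥ (hessE f y - hessE f x).mulVec (fun i => v i)
        ≤ Lt * ‖u‖ * ‖v‖ ^ 2 := by
      calc (fun i => v i) ⬝ᵥ (hessE f y - hessE f x).mulVec (fun i => v i)
          ≤ specNorm (hessE f y - hessE f x) * ‖v‖ ^ 2 := quad_le_specNorm _ v
        _ ≤ (Lt * ‖y - x‖) * ‖v‖ ^ 2 := by
            have := hLip y x
            nlinarith [sq_nonneg ‖v‖]
        _ = Lt * ‖u‖ * ‖v‖ ^ 2 := by rw [hu]
    have hsub : (fun i => v i) ⬝ᵥ (hessE f y).mulVec (fun i => v i)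
        - (fun i => v i) ⬝ᵥ (hessE f x).mulVec (fun i => v i)
        ≤ Lt * ‖u‖ * ‖v‖ ^ 2 := by
      rw [← dotProduct_sub, ← sub_mulVec] at *
      exact hq
    have hc : 0 ≤ Lt / μ ^ ((3 : ℝ) / 2) * a := by
      apply mul_nonneg _ ha0
      apply div_nonneg hLt (Real.rpow_nonneg hμ.le _)
    -- key: Lt * ‖u‖ * ‖v‖^2 ≤ c * (v ⬝ Hw v)
    have key : Lt * ‖u‖ * ‖v‖ ^ 2
        ≤ Lt / μ ^ ((3 : ℝ) / 2) * a * ((fun i => v i) ⬝ᵥ (hessE f w).mulVec (fun i => v i)) := by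
      calc Lt * ‖u‖ * ‖v‖ ^ 2 ≤ Lt / μ ^ ((3 : ℝ) / 2) * a * (μ * ‖v‖ ^ 2) := by
            have step : Lt * ‖v‖ ^ 2 * (s * ‖u‖) ≤ Lt * ‖v‖ ^ 2 * a :=
              mul_le_mul_of_nonneg_left hsu (mul_nonneg hLt (sq_nonneg _))
            have step2 := mul_le_mul_of_nonneg_left step hμ.le
            rw [hpow, div_mul_eq_mul_div, div_mul_eq_mul_div, le_div_iff₀ (by positivity)]
            nlinarith [step2]
        _ ≤ Lt / μ ^ ((3 : ℝ) / 2) * a * ((fun i => v i) ⬝ᵥ (hessE f w).mulVec (fun i => v i)) := by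
            exact mul_le_mul_of_nonneg_left hquadw hc
    linarith

end
end

section
/- Let f : ℝ^d → ℝ be twice continuously differentiable, convex (∇²f(x) ⪰ 0 for all x), and M-strongly self-concordant. For x, y ∈ ℝ^d set r := ‖y − x‖_{∇²f(x)} and J := ∫₀¹ ∇²f(x + t(y − x)) dt. Then (1/(1 + Mr/2))·∇²f(x) ⪯ J ⪯ (1 + Mr/2)·∇²f(x) and (1/(1 + Mr/2))·∇²f(y) ⪯ J ⪯ (1 + Mr/2)·∇²f(y). -/
open Matrix

noncomputable section

lemma aux_quad {d : ℕ} (A : Matrix (Fin d) (Fin d) ℝ) (v : Fin d → ℝ) :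
    v ⬝ᵥ A.mulVec v = ∑ i, ∑ j, v i * (A i j * v j) := by
  simp [dotProduct, Matrix.mulVec, Finset.mul_sum]

lemma aux_anorm_smul {d : ℕ} (A : Matrix (Fin d) (Fin d) ℝ) {t : ℝ} (ht : 0 ≤ t) (u : Evec d) :
    anorm A (t • u) = t * anorm A u := by
  unfold anorm
  have h : (fun i => (t • u) i) = t • (fun i => u i) := rfl
  rw [h, smul_dotProduct, Matrix.mulVec_smul, dotProduct_smul, smul_eq_mul, smul_eq_mul,
    ← mul_assoc, Real.sqrt_mul (mul_nonneg ht ht), Real.sqrt_mul_self ht]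

lemma aux_anorm_neg {d : ℕ} (A : Matrix (Fin d) (Fin d) ℝ) (u : Evec d) :
    anorm A (-u) = anorm A u := by
  unfold anorm
  have h : (fun i => (-u) i) = -(fun i => u i) := rfl
  rw [h, neg_dotProduct, Matrix.mulVec_neg, dotProduct_neg, neg_neg]

lemma aux_psd {d : ℕ} (A : Matrix (Fin d) (Fin d) ℝ)
    (h1 : ∀ i j, A i j = A j i) (h2 : ∀ v : Fin d → ℝ, 0 ≤ v ⬝ᵥ A.mulVec v) :
    A.PosSemidef :=
  Matrix.PosSemidef.of_dotProduct_mulVec_nonneg (Matrix.IsHermitian.ext fun i j => by rw [star_trivial]; exact h1 j i)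
   (fun v => by simpa using h2 v)

lemma aux_Ilin (p q : ℝ) : ∫ t in (0:ℝ)..1, (p + t * q) = p + q / 2 := by
  have h2 : IntervalIntegrable (fun t : ℝ => t * q) MeasureTheory.volume 0 1 :=
    (continuous_id.mul continuous_const).intervalIntegrable _ _
  rw [intervalIntegral.integral_add intervalIntegrable_const h2,
    intervalIntegral.integral_const, intervalIntegral.integral_mul_const, integral_id]
  norm_num
  ring

lemma aux_scalar {a0 at' c b : ℝ} (ha0 : 0 ≤ a0) (hat : 0 ≤ at') (hb : 1 ≤ b) (hc : 1 ≤ c)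
    (h : a0 ≤ b * at') : (2 * c - b) / c ^ 2 * a0 ≤ at' := by
  rw [div_mul_eq_mul_div, div_le_iff₀ (by positivity)]
  rcases le_or_gt b (2 * c) with hcase | hcase
  · nlinarith [mul_nonneg hat (sq_nonneg (b - c)),
      mul_nonneg (sub_nonneg.2 hcase) (sub_nonneg.2 h)]
  · nlinarith [mul_nonneg ha0 (sub_pos.2 hcase).le, mul_nonneg (mul_nonneg (zero_le_one.trans hc) (zero_le_one.trans hc)) hat]


/-- the averaged Hessian J = ∫₀¹ ∇²f(x + t(y−x)) dt is multiplicatively close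
to both ∇²f(x) and ∇²f(y). -/
theorem stmt_3 {d : ℕ} (f : Evec d → ℝ) (M : ℝ)
    (hC2 : ContDiff ℝ 2 f)
    (hconv : ∀ x : Evec d, (hessE f x).PosSemidef)
    (hsc : ∀ x y z w : Evec d,
      ((M * anorm (hessE f z) (y - x)) • hessE f w - (hessE f y - hessE f x)).PosSemidef)
    (x y : Evec d) (r : ℝ) (hr : r = anorm (hessE f x) (y - x))
    (J : Matrix (Fin d) (Fin d) ℝ)
    (hJ : J = Matrix.of fun i j => ∫ t in (0 : ℝ)..1, hessE f (x + t • (y - x)) i j) :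
    (J - (1 + M * r / 2)⁻¹ • hessE f x).PosSemidef
      ∧ ((1 + M * r / 2) • hessE f x - J).PosSemidef
      ∧ (J - (1 + M * r / 2)⁻¹ • hessE f y).PosSemidef
      ∧ ((1 + M * r / 2) • hessE f y - J).PosSemidef := by
  set u : Evec d := y - x with hu
  set c : ℝ := 1 + M * r / 2 with hc
  -- scalar form of self-concordance
  have hpos : ∀ (p : Evec d) (v : Fin d → ℝ), 0 ≤ v ⬝ᵥ (hessE f p).mulVec v := by
    intro p v; simpa using (hconv p).dotProduct_mulVec_nonneg v
  have hscq : ∀ (p q w : Evec d) (v : Fin d → ℝ),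
      v ⬝ᵥ (hessE f q).mulVec v - v ⬝ᵥ (hessE f p).mulVec v ≤
        (M * anorm (hessE f x) (q - p)) * (v ⬝ᵥ (hessE f w).mulVec v) := by
    intro p q w v
    have h := (hsc p q x w).dotProduct_mulVec_nonneg v
    rw [star_trivial, Matrix.sub_mulVec, Matrix.sub_mulVec, Matrix.smul_mulVec,
      dotProduct_sub, dotProduct_sub, dotProduct_smul, smul_eq_mul] at h
    linarith
  -- M * r ≥ 0
  have hr0 : 0 ≤ r := hr ▸ Real.sqrt_nonneg _
  have hMr : 0 ≤ M * r := by
    by_contra hneg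
    push_neg at hneg
    have h1 := hscq x y x (fun i => u i)
    have h2 := hscq y x x (fun i => u i)
    rw [← hu, ← hr] at h1
    rw [show x - y = -u from by rw [hu, neg_sub], aux_anorm_neg, ← hr] at h2
    have hax : (fun i : Fin d => u i) ⬝ᵥ (hessE f x).mulVec (fun i => u i) = 0 := by
      have h3 := hpos x (fun i => u i)
      nlinarith
    have hrz : r = 0 := by
      rw [hr]; unfold anorm; rw [hax, Real.sqrt_zero]
    rw [hrz, mul_zero] at hneg
    exact absurd hneg (lt_irrefl 0)
  have hc1 : (1:ℝ) ≤ c := by rw [hc]; linarith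
  have hc0 : (0:ℝ) < c := lt_of_lt_of_le one_pos hc1
  have hMrc : M * r = 2 * (c - 1) := by rw [hc]; ring
  -- continuity
  have hcontH : ∀ i j : Fin d, Continuous fun t : ℝ => hessE f (x + t • u) i j := by
    intro i j
    have h1 : Continuous fun t : ℝ => x + t • u :=
      continuous_const.add (continuous_id.smul continuous_const)
    have h2 : Continuous (iteratedFDeriv ℝ 2 f) := hC2.continuous_iteratedFDeriv le_rfl
    exact (continuous_eval_const _).comp (h2.comp h1)
  have hconta : ∀ v : Fin d → ℝ,
      Continuous (fun t : ℝ => v ⬝ᵥ (hessE f (x + t • u)).mulVec v) := by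
    intro v
    have h : (fun t : ℝ => v ⬝ᵥ (hessE f (x + t • u)).mulVec v)
        = fun t => ∑ i, ∑ j, v i * (hessE f (x + t • u) i j * v j) := by
      funext t; exact aux_quad _ _
    rw [h]
    exact continuous_finset_sum _ fun i _ => continuous_finset_sum _ fun j _ =>
      continuous_const.mul ((hcontH i j).mul continuous_const)
  -- quadratic form of J
  have hJv : ∀ v : Fin d → ℝ,
      v ⬝ᵥ J.mulVec v = ∫ t in (0:ℝ)..1, v ⬝ᵥ (hessE f (x + t • u)).mulVec v := by
    intro v
    have hint : ∀ i j : Fin d, IntervalIntegrable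
        (fun t => v i * (hessE f (x + t • u) i j * v j)) MeasureTheory.volume 0 1 :=
      fun i j => (continuous_const.mul ((hcontH i j).mul continuous_const)).intervalIntegrable _ _
    rw [aux_quad]
    calc ∑ i, ∑ j, v i * (J i j * v j)
        = ∑ i, ∑ j, ∫ t in (0:ℝ)..1, v i * (hessE f (x + t • u) i j * v j) := by
          refine Finset.sum_congr rfl fun i _ => Finset.sum_congr rfl fun j _ => ?_
          rw [hJ]
          simp only [Matrix.of_apply]
          rw [← intervalIntegral.integral_mul_const, ← intervalIntegral.integral_const_mul]
      _ = ∑ i, ∫ t in (0:ℝ)..1, ∑ j, v i * (hessE f (x + t • u) i j * v j) :=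
          Finset.sum_congr rfl fun i _ =>
            (intervalIntegral.integral_finset_sum fun j _ => hint i j).symm
      _ = ∫ t in (0:ℝ)..1, ∑ i, ∑ j, v i * (hessE f (x + t • u) i j * v j) :=
          (intervalIntegral.integral_finset_sum fun i _ =>
            (continuous_finset_sum _ fun j _ =>
              continuous_const.mul ((hcontH i j).mul continuous_const)).intervalIntegrable _ _).symm
      _ = ∫ t in (0:ℝ)..1, v ⬝ᵥ (hessE f (x + t • u)).mulVec v :=
          intervalIntegral.integral_congr fun t _ => (aux_quad _ _).symm
  -- segment identities
  have hseg1 : ∀ t : ℝ, (x + t • u) - x = t • u := fun t => add_sub_cancel_left x _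
  have hseg2 : ∀ t : ℝ, x - (x + t • u) = -(t • u) := fun t => by
    have h := congrArg Neg.neg (hseg1 t)
    rw [neg_sub] at h
    exact h
  have hseg3 : ∀ t : ℝ, y - (x + t • u) = (1 - t) • u := by
    intro t
    rw [sub_smul, one_smul, hu]
    abel
  have hcne : c ≠ 0 := ne_of_gt hc0
  -- entrywise symmetry
  have hsym : ∀ (p : Evec d) (i j : Fin d), hessE f p i j = hessE f p j i := by
    intro p i j
    simpa using (hconv p).1.apply j i
  have hJsym : ∀ i j, J i j = J j i := by
    intro i j
    rw [hJ]
    simp only [Matrix.of_apply]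
    exact intervalIntegral.integral_congr fun t _ => hsym _ i j
  -- pointwise quadratic-form bounds on [0,1]
  have hq0 : ∀ (v : Fin d → ℝ) (t : ℝ), t ∈ Set.Icc (0:ℝ) 1 →
      v ⬝ᵥ (hessE f x).mulVec v
        ≤ (1 + t * (M * r)) * (v ⬝ᵥ (hessE f (x + t • u)).mulVec v) := by
    intro v t ht
    have h := hscq (x + t • u) x (x + t • u) v
    rw [hseg2 t, aux_anorm_neg, aux_anorm_smul _ ht.1, ← hr] at h
    nlinarith [h]
  have hq0' : ∀ (v : Fin d → ℝ) (t : ℝ), t ∈ Set.Icc (0:ℝ) 1 →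
      v ⬝ᵥ (hessE f (x + t • u)).mulVec v
        ≤ v ⬝ᵥ (hessE f x).mulVec v + t * (M * r * (v ⬝ᵥ (hessE f x).mulVec v)) := by
    intro v t ht
    have h := hscq x (x + t • u) x v
    rw [hseg1 t, aux_anorm_smul _ ht.1, ← hr] at h
    nlinarith [h]
  have hq1 : ∀ (v : Fin d → ℝ) (t : ℝ), t ∈ Set.Icc (0:ℝ) 1 →
      v ⬝ᵥ (hessE f y).mulVec v
        ≤ (1 + (1 - t) * (M * r)) * (v ⬝ᵥ (hessE f (x + t • u)).mulVec v) := by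
    intro v t ht
    have h := hscq (x + t • u) y (x + t • u) v
    rw [hseg3 t, aux_anorm_smul _ (by linarith [ht.2] : (0:ℝ) ≤ 1 - t), ← hr] at h
    nlinarith [h]
  have hq1' : ∀ (v : Fin d → ℝ) (t : ℝ), t ∈ Set.Icc (0:ℝ) 1 →
      v ⬝ᵥ (hessE f (x + t • u)).mulVec v
        ≤ (v ⬝ᵥ (hessE f y).mulVec v + M * r * (v ⬝ᵥ (hessE f y).mulVec v))
            + t * (-(M * r * (v ⬝ᵥ (hessE f y).mulVec v))) := by
    intro v t ht
    have h := hscq y (x + t • u) y v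
    have hxty : (x + t • u) - y = -((1 - t) • u) := by
      have h2 := congrArg Neg.neg (hseg3 t)
      rw [neg_sub] at h2
      exact h2
    rw [hxty, aux_anorm_neg, aux_anorm_smul _ (by linarith [ht.2] : (0:ℝ) ≤ 1 - t), ← hr] at h
    nlinarith [h]
  -- integrability
  have hintA : ∀ v : Fin d → ℝ, IntervalIntegrable
      (fun t => v ⬝ᵥ (hessE f (x + t • u)).mulVec v) MeasureTheory.volume 0 1 :=
    fun v => (hconta v).intervalIntegrable _ _
  have hintLin : ∀ p q : ℝ,
      IntervalIntegrable (fun t : ℝ => p + t * q) MeasureTheory.volume 0 1 :=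
    fun p q => (continuous_const.add (continuous_id.mul continuous_const)).intervalIntegrable _ _
  -- integrated bounds
  have Ux : ∀ v : Fin d → ℝ, v ⬝ᵥ J.mulVec v ≤ c * (v ⬝ᵥ (hessE f x).mulVec v) := by
    intro v
    rw [hJv v]
    have h := intervalIntegral.integral_mono_on zero_le_one (hintA v)
      (hintLin (v ⬝ᵥ (hessE f x).mulVec v) (M * r * (v ⬝ᵥ (hessE f x).mulVec v))) (hq0' v)
    rw [aux_Ilin] at h
    rw [hc]
    linarith
  have Uy : ∀ v : Fin d → ℝ, v ⬝ᵥ J.mulVec v ≤ c * (v ⬝ᵥ (hessE f y).mulVec v) := by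
    intro v
    rw [hJv v]
    have h := intervalIntegral.integral_mono_on zero_le_one (hintA v)
      (hintLin (v ⬝ᵥ (hessE f y).mulVec v + M * r * (v ⬝ᵥ (hessE f y).mulVec v))
        (-(M * r * (v ⬝ᵥ (hessE f y).mulVec v)))) (hq1' v)
    rw [aux_Ilin] at h
    rw [hc]
    linarith
  have Lx : ∀ v : Fin d → ℝ, c⁻¹ * (v ⬝ᵥ (hessE f x).mulVec v) ≤ v ⬝ᵥ J.mulVec v := by
    intro v
    rw [hJv v]
    have hlow : ∀ t ∈ Set.Icc (0:ℝ) 1,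
        (2*c - 1)/c^2 * (v ⬝ᵥ (hessE f x).mulVec v)
            + t * (-(M * r)/c^2 * (v ⬝ᵥ (hessE f x).mulVec v))
          ≤ v ⬝ᵥ (hessE f (x + t • u)).mulVec v := by
      intro t ht
      have hb : (1:ℝ) ≤ 1 + t * (M * r) := by nlinarith [mul_nonneg ht.1 hMr]
      have h2 := aux_scalar (hpos x v) (hpos (x + t • u) v) hb hc1 (hq0 v t ht)
      have h3 : (2*c - 1)/c^2 * (v ⬝ᵥ (hessE f x).mulVec v)
            + t * (-(M * r)/c^2 * (v ⬝ᵥ (hessE f x).mulVec v))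
          = (2*c - (1 + t * (M * r)))/c^2 * (v ⬝ᵥ (hessE f x).mulVec v) := by ring
      linarith [h2, h3.le, h3.ge]
    have h := intervalIntegral.integral_mono_on zero_le_one
      (hintLin ((2*c - 1)/c^2 * (v ⬝ᵥ (hessE f x).mulVec v))
        (-(M * r)/c^2 * (v ⬝ᵥ (hessE f x).mulVec v))) (hintA v) hlow
    rw [aux_Ilin] at h
    have heq : (2*c - 1)/c^2 * (v ⬝ᵥ (hessE f x).mulVec v)
        + (-(M * r)/c^2 * (v ⬝ᵥ (hessE f x).mulVec v)) / 2
        = c⁻¹ * (v ⬝ᵥ (hessE f x).mulVec v) := by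
      rw [hMrc]
      field_simp
      ring
    linarith
  have Ly : ∀ v : Fin d → ℝ, c⁻¹ * (v ⬝ᵥ (hessE f y).mulVec v) ≤ v ⬝ᵥ J.mulVec v := by
    intro v
    rw [hJv v]
    have hlow : ∀ t ∈ Set.Icc (0:ℝ) 1,
        (2*c - 1 - M * r)/c^2 * (v ⬝ᵥ (hessE f y).mulVec v)
            + t * ((M * r)/c^2 * (v ⬝ᵥ (hessE f y).mulVec v))
          ≤ v ⬝ᵥ (hessE f (x + t • u)).mulVec v := by
      intro t ht
      have hb : (1:ℝ) ≤ 1 + (1 - t) * (M * r) := by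
        nlinarith [mul_nonneg (by linarith [ht.2] : (0:ℝ) ≤ 1 - t) hMr]
      have h2 := aux_scalar (hpos y v) (hpos (x + t • u) v) hb hc1 (hq1 v t ht)
      have h3 : (2*c - 1 - M * r)/c^2 * (v ⬝ᵥ (hessE f y).mulVec v)
            + t * ((M * r)/c^2 * (v ⬝ᵥ (hessE f y).mulVec v))
          = (2*c - (1 + (1 - t) * (M * r)))/c^2 * (v ⬝ᵥ (hessE f y).mulVec v) := by ring
      linarith [h2, h3.le, h3.ge]
    have h := intervalIntegral.integral_mono_on zero_le_one
      (hintLin ((2*c - 1 - M * r)/c^2 * (v ⬝ᵥ (hessE f y).mulVec v))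
        ((M * r)/c^2 * (v ⬝ᵥ (hessE f y).mulVec v))) (hintA v) hlow
    rw [aux_Ilin] at h
    have heq : (2*c - 1 - M * r)/c^2 * (v ⬝ᵥ (hessE f y).mulVec v)
        + ((M * r)/c^2 * (v ⬝ᵥ (hessE f y).mulVec v)) / 2
        = c⁻¹ * (v ⬝ᵥ (hessE f y).mulVec v) := by
      rw [hMrc]
      field_simp
      ring
    linarith
  -- assemble
  refine ⟨aux_psd _ ?_ ?_, aux_psd _ ?_ ?_, aux_psd _ ?_ ?_, aux_psd _ ?_ ?_⟩
  · intro i j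
    simp only [Matrix.sub_apply, Matrix.smul_apply, smul_eq_mul]
    rw [hJsym i j, hsym x i j]
  · intro v
    rw [Matrix.sub_mulVec, dotProduct_sub, Matrix.smul_mulVec, dotProduct_smul, smul_eq_mul]
    linarith [Lx v]
  · intro i j
    simp only [Matrix.sub_apply, Matrix.smul_apply, smul_eq_mul]
    rw [hJsym i j, hsym x i j]
  · intro v
    rw [Matrix.sub_mulVec, dotProduct_sub, Matrix.smul_mulVec, dotProduct_smul, smul_eq_mul]
    linarith [Ux v]
  · intro i j
    simp only [Matrix.sub_apply, Matrix.smul_apply, smul_eq_mul]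
    rw [hJsym i j, hsym y i j]
  · intro v
    rw [Matrix.sub_mulVec, dotProduct_sub, Matrix.smul_mulVec, dotProduct_smul, smul_eq_mul]
    linarith [Ly v]
  · intro i j
    simp only [Matrix.sub_apply, Matrix.smul_apply, smul_eq_mul]
    rw [hJsym i j, hsym y i j]
  · intro v
    rw [Matrix.sub_mulVec, dotProduct_sub, Matrix.smul_mulVec, dotProduct_smul, smul_eq_mul]
    linarith [Uy v]


end
end

section
/- Let A, G be symmetric positive definite d×d real matrices such that A ⪯ G ⪯ ηA for some η > 1, let u ∈ ℝ^d, and set G₊ := SR1(G, A, u). Then A ⪯ G₊ ⪯ G ⪯ ηA. -/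
open Matrix

noncomputable section

open scoped Classical in
/-- SR1 update: SR1(G, A, u) = G if Gu = Au, otherwise
G − (G−A)uuᵀ(G−A)/(uᵀ(G−A)u). -/
noncomputable def SR1 {d : ℕ} (G A : Matrix (Fin d) (Fin d) ℝ) (u : Fin d → ℝ) :
    Matrix (Fin d) (Fin d) ℝ :=
  if G.mulVec u = A.mulVec u then G
  else G - (u ⬝ᵥ (G - A).mulVec u)⁻¹ • ((G - A) * vecMulVec u u * (G - A))

lemma vmv_mulVec {d : ℕ} (w v y : Fin d → ℝ) : (vecMulVec w v) *ᵥ y = (v ⬝ᵥ y) • w := by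
  ext i
  simp [mulVec, vecMulVec_apply, dotProduct, Finset.mul_sum, Finset.sum_mul,
    mul_comm, mul_assoc, mul_left_comm]

lemma vmv_psd {d : ℕ} (w : Fin d → ℝ) : (vecMulVec w w).PosSemidef := by
  refine posSemidef_iff_dotProduct_mulVec.mpr ⟨?_, ?_⟩
  · ext i j; simp [vecMulVec_apply, mul_comm]
  · intro x
    have : star x ⬝ᵥ (vecMulVec w w) *ᵥ x = (w ⬝ᵥ x) * (w ⬝ᵥ x) := by
      simp [vmv_mulVec, dotProduct_smul, dotProduct_comm, mul_comm, smul_eq_mul]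
    rw [this]; exact mul_self_nonneg _

lemma psd_smul' {d : ℕ} {M : Matrix (Fin d) (Fin d) ℝ} (hM : M.PosSemidef) {c : ℝ}
    (hc : 0 ≤ c) : (c • M).PosSemidef := by
  refine posSemidef_iff_dotProduct_mulVec.mpr ⟨?_, ?_⟩
  · unfold Matrix.IsHermitian
    rw [conjTranspose_smul, hM.1.eq, star_trivial]
  · intro x
    have : star x ⬝ᵥ (c • M) *ᵥ x = c * (star x ⬝ᵥ M *ᵥ x) := by
      rw [smul_mulVec, dotProduct_smul, smul_eq_mul]
    rw [this]
    exact mul_nonneg hc (hM.dotProduct_mulVec_nonneg x)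

lemma bvmvb {d : ℕ} {B : Matrix (Fin d) (Fin d) ℝ} (hB : B.IsHermitian) (u : Fin d → ℝ) :
    B * vecMulVec u u * B = vecMulVec (B *ᵥ u) (B *ᵥ u) := by
  have hBt : Bᵀ = B := hB
  have step1 : B * vecMulVec u u = vecMulVec (B *ᵥ u) u := by
    ext i k
    simp [mul_apply, vecMulVec_apply, mulVec, dotProduct, Finset.sum_mul, mul_assoc]
  have step3 : u ᵥ* B = B *ᵥ u := by
    conv_rhs => rw [← hBt]
    rw [mulVec_transpose]
  have step2 : vecMulVec (B *ᵥ u) u * B = vecMulVec (B *ᵥ u) (u ᵥ* B) := by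
    ext i j
    simp [mul_apply, vecMulVec_apply, vecMul, dotProduct, Finset.mul_sum, mul_assoc]
  rw [step1, step2, step3]

lemma key_psd {d : ℕ} {B : Matrix (Fin d) (Fin d) ℝ} (hB : B.PosSemidef) (u : Fin d → ℝ)
    (hw : B *ᵥ u ≠ 0) :
    (B - (u ⬝ᵥ B *ᵥ u)⁻¹ • vecMulVec (B *ᵥ u) (B *ᵥ u)).PosSemidef := by
  set w := B *ᵥ u with hwdef
  set c := u ⬝ᵥ B *ᵥ u with hcdef
  have hBt : Bᵀ = B := hB.1
  have hsym : ∀ a b : Fin d → ℝ, a ⬝ᵥ B *ᵥ b = b ⬝ᵥ B *ᵥ a := by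
    intro a b
    rw [dotProduct_mulVec, ← mulVec_transpose, hBt, dotProduct_comm]
  have hc0 : 0 ≤ c := by simpa using hB.dotProduct_mulVec_nonneg u
  have hc : 0 < c := by
    rcases hc0.lt_or_eq with h | h
    · exact h
    · exfalso; apply hw
      have := (hB.dotProduct_mulVec_zero_iff u).mp (by simpa using h.symm)
      exact this
  refine posSemidef_iff_dotProduct_mulVec.mpr ⟨?_, ?_⟩
  · unfold Matrix.IsHermitian
    rw [conjTranspose_sub, hB.1.eq, conjTranspose_smul, (vmv_psd w).1.eq, star_trivial]
  · intro x
    set s := x ⬝ᵥ B *ᵥ u with hsdef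
    have hq : ∀ t : ℝ, 0 ≤ c * (t * t) + (2 * s) * t + x ⬝ᵥ B *ᵥ x := by
      intro t
      have h0 := hB.dotProduct_mulVec_nonneg (x + t • u)
      have hexp : star (x + t • u) ⬝ᵥ B *ᵥ (x + t • u)
          = c * (t * t) + (2 * s) * t + x ⬝ᵥ B *ᵥ x := by
        simp only [star_trivial, mulVec_add, mulVec_smul, dotProduct_add, add_dotProduct,
          dotProduct_smul, smul_dotProduct, smul_eq_mul]
        rw [hsym u x]
        ring_nf
        rw [← hsdef, ← hcdef]
      rwa [hexp] at h0
    have hd := discrim_le_zero hq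
    rw [discrim] at hd
    have hcs : s * s ≤ (x ⬝ᵥ B *ᵥ x) * c := by nlinarith
    have hform : star x ⬝ᵥ (B - c⁻¹ • vecMulVec w w) *ᵥ x
        = x ⬝ᵥ B *ᵥ x - c⁻¹ * (s * s) := by
      have hwx : w ⬝ᵥ x = s := by rw [hwdef, dotProduct_comm]
      simp only [star_trivial, sub_mulVec, dotProduct_sub, smul_mulVec,
        dotProduct_smul, smul_eq_mul, vmv_mulVec, dotProduct_comm w x, hwx]
      rw [dotProduct_comm x w, hwx]
    rw [hform]
    have : c⁻¹ * (s * s) ≤ x ⬝ᵥ B *ᵥ x := by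
      rw [inv_mul_le_iff₀ hc]
      exact hcs.trans_eq (mul_comm _ _)
    linarith

/-- the SR1 update preserves the sandwich A ⪯ G₊ ⪯ G ⪯ ηA. -/
theorem stmt_4 {d : ℕ} (A G : Matrix (Fin d) (Fin d) ℝ) (η : ℝ) (hη : 1 < η)
    (hA : A.PosDef) (hG : G.PosDef)
    (hAG : (G - A).PosSemidef) (hGηA : (η • A - G).PosSemidef)
    (u : Fin d → ℝ) :
    (SR1 G A u - A).PosSemidef ∧ (G - SR1 G A u).PosSemidef ∧ (η • A - G).PosSemidef := by
  refine ⟨?_, ?_, hGηA⟩ <;> rw [SR1]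
  · by_cases h : G *ᵥ u = A *ᵥ u
    · rw [if_pos h]; exact hAG
    · rw [if_neg h]
      have hw : (G - A) *ᵥ u ≠ 0 := by
        rw [sub_mulVec, sub_ne_zero]; exact h
      have := key_psd hAG u hw
      rw [bvmvb hAG.1 u]
      have heq : G - (u ⬝ᵥ (G - A) *ᵥ u)⁻¹ • vecMulVec ((G - A) *ᵥ u) ((G - A) *ᵥ u) - A
          = (G - A) - (u ⬝ᵥ (G - A) *ᵥ u)⁻¹ • vecMulVec ((G - A) *ᵥ u) ((G - A) *ᵥ u) := by
        abel
      rw [heq]; exact this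
  · by_cases h : G *ᵥ u = A *ᵥ u
    · rw [if_pos h]; simpa using Matrix.PosSemidef.zero
    · rw [if_neg h]
      rw [bvmvb hAG.1 u, sub_sub_cancel]
      set w := (G - A) *ᵥ u with hwdef
      have hw : w ≠ 0 := by rw [hwdef, sub_mulVec, sub_ne_zero]; exact h
      have hc0 : 0 ≤ u ⬝ᵥ (G - A) *ᵥ u := by simpa using hAG.dotProduct_mulVec_nonneg u
      exact psd_smul' (vmv_psd w) (inv_nonneg.mpr hc0)

end
end

section
/- Let A, G be symmetric positive definite d×d real matrices such that A ⪯ G, and set G₊ := SR1(G, A, ū(G, A)), where ū(G, A) is the greedy direction. Then tr(G₊ − A) ≤ (1 − 1/d)·tr(G − A). -/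
open Matrix

noncomputable section

lemma psd_col_zero {d : ℕ} (M : Matrix (Fin d) (Fin d) ℝ) (hM : M.PosSemidef)
    (j : Fin d) (h0 : M j j = 0) (i : Fin d) : M i j = 0 := by
  have hsym : M j i = M i j := hM.isHermitian.apply i j
  have key : ∀ t : ℝ, 0 ≤ M i i * (t * t) + (2 * M i j) * t + 0 := by
    intro t
    have h2 := hM.dotProduct_mulVec_nonneg ((t • (Pi.single i 1 : Fin d → ℝ) + Pi.single j 1))
    simp only [star_trivial, mulVec_add, mulVec_smul, dotProduct_add, add_dotProduct,
      dotProduct_smul, smul_dotProduct, mulVec_single, mul_one, single_dotProduct,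
      smul_eq_mul, one_mul] at h2
    simp only [col_apply, MulOpposite.op_one, one_smul] at h2
    rw [hsym, h0] at h2
    ring_nf at h2 ⊢
    linarith [h2]
  have hd := discrim_le_zero key
  rw [discrim] at hd
  nlinarith [sq_nonneg (M i j)]


/-- the greedy SR1 update contracts the trace of the residual by (1 − 1/d). -/
theorem stmt_5 {d : ℕ} (A G : Matrix (Fin d) (Fin d) ℝ)
    (hA : A.PosDef) (hG : G.PosDef)
    (hAG : (G - A).PosSemidef)
    (j : Fin d) (hj : ∀ l : Fin d, (G - A) l l ≤ (G - A) j j) :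
    (SR1 G A (Pi.single j 1) - A).trace ≤ (1 - 1 / (d : ℝ)) * (G - A).trace := by
  set M := G - A with hMdef
  have hd : 0 < d := j.pos
  have hdR : (0:ℝ) < d := by exact_mod_cast hd
  have hdiag : ∀ i, 0 ≤ M i i := by
    intro i
    have := hAG.dotProduct_mulVec_nonneg (Pi.single i 1)
    simpa [mulVec_single, single_dotProduct] using this
  have htr : M.trace = ∑ i, M i i := rfl
  have htr_nonneg : 0 ≤ M.trace := Finset.sum_nonneg fun i _ => hdiag i
  have htr_le : M.trace ≤ (d : ℝ) * M j j := by
    rw [htr]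
    calc ∑ i, M i i ≤ ∑ _i : Fin d, M j j := Finset.sum_le_sum fun i _ => hj i
    _ = (d : ℝ) * M j j := by simp [Finset.sum_const, mul_comm]
  rw [SR1]
  split_ifs with h
  · -- trivial case : M j j = 0, trace M = 0
    have hMj : M.mulVec (Pi.single j 1) = 0 := by
      rw [hMdef, sub_mulVec, h, sub_self]
    have hjj : M j j = 0 := by
      have := congrFun hMj j
      simpa [mulVec_single] using this
    have htr0 : M.trace = 0 := le_antisymm (by rw [hjj] at htr_le; simpa using htr_le) htr_nonneg
    rw [← hMdef, htr0]
    simp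
  · -- nontrivial case
    have hne : M.mulVec (Pi.single j 1) ≠ 0 := by
      intro h'
      apply h
      rw [hMdef, sub_mulVec, sub_eq_zero] at h'
      exact h'
    have hjj : 0 < M j j := by
      rcases lt_or_eq_of_le (hdiag j) with h' | h'
      · exact h'
      · exfalso
        apply hne
        funext i
        simpa [mulVec_single] using psd_col_zero M hAG j h'.symm i
    have hcval : (Pi.single j 1 : Fin d → ℝ) ⬝ᵥ M.mulVec (Pi.single j 1) = M j j := by
      simp [mulVec_single, single_dotProduct]
    have hrw : G - (M j j)⁻¹ • (M * vecMulVec (Pi.single j 1) (Pi.single j 1) * M) - A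
        = M - (M j j)⁻¹ • (M * vecMulVec (Pi.single j 1) (Pi.single j 1) * M) := by
      rw [hMdef]; abel
    rw [hcval, hrw, trace_sub, trace_smul]
    -- trace of correction term
    have hcorr : (M * vecMulVec (Pi.single j 1) (Pi.single j 1) * M).trace
        = ∑ i, (M i j)^2 := by
      have hs : ∀ i, M j i = M i j := fun i => hAG.isHermitian.apply i j
      simp only [trace, diag, mul_apply, vecMulVec_apply, Pi.single_apply]
      rw [Finset.sum_congr rfl]
      intro i _
      rw [show ∑ x, (∑ x_1, M i x_1 * ((if x_1 = j then (1:ℝ) else 0) * if x = j then 1 else 0)) * M x i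
          = M i j * M j i by
        rw [Finset.sum_eq_single j] <;> simp +contextual [Finset.sum_eq_single j, Finset.sum_ite_eq']]
      rw [hs i]; ring
    rw [hcorr, smul_eq_mul]
    have hsum_ge : (M j j)^2 ≤ ∑ i, (M i j)^2 := by
      have := Finset.single_le_sum (f := fun i => (M i j)^2) (fun i _ => sq_nonneg _)
        (Finset.mem_univ j)
      simpa using this
    have h1 : M j j ≤ (M j j)⁻¹ * ∑ i, (M i j)^2 := by
      calc M j j = (M j j)⁻¹ * (M j j)^2 := by
            field_simp [pow_two]
      _ ≤ (M j j)⁻¹ * ∑ i, (M i j)^2 :=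
          mul_le_mul_of_nonneg_left hsum_ge (inv_nonneg.2 hjj.le)
    have h2 : (1 - 1 / (d:ℝ)) * M.trace = M.trace - M.trace / d := by ring
    rw [h2]
    have h3 : M.trace / d ≤ M j j := by
      rw [div_le_iff₀ hdR]
      linarith [htr_le]
    linarith


end
end

section
/- Let A, G be symmetric d×d real matrices with A ⪯ G, let 1 ≤ k < d, let U := Ū(G, A) be the greedy matrix (and assume either GU = AU or U^⊤(G−A)U is invertible), and set G₊ := SR-k(G, A, U). Then tr(G₊ − A) ≤ (1 − k/d)·tr(G − A). -/
section Helpers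

open Matrix

lemma psd_diag_nonneg' {d : ℕ} {X : Matrix (Fin d) (Fin d) ℝ} (hX : X.PosSemidef) (j : Fin d) :
    0 ≤ X j j := by
  exact hX.diag_nonneg

lemma psd_trace_nonneg' {d : ℕ} {X : Matrix (Fin d) (Fin d) ℝ} (hX : X.PosSemidef) :
    0 ≤ X.trace :=
  Finset.sum_nonneg fun j _ => psd_diag_nonneg' hX j

open scoped Matrix.Norms.L2Operator in
open scoped MatrixOrder in
lemma psd_eq_transpose_mul_self' {d : ℕ} {X : Matrix (Fin d) (Fin d) ℝ} (hX : X.PosSemidef) :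
    ∃ B : Matrix (Fin d) (Fin d) ℝ, X = Bᴴ * B := by
  obtain ⟨B, rfl⟩ := CStarAlgebra.nonneg_iff_eq_star_mul_self.mp hX.nonneg
  exact ⟨B, rfl⟩

lemma psd_trace_mul_nonneg' {d : ℕ} {X Y : Matrix (Fin d) (Fin d) ℝ}
    (hX : X.PosSemidef) (hY : Y.PosSemidef) : 0 ≤ (X * Y).trace := by
  obtain ⟨B, rfl⟩ := psd_eq_transpose_mul_self' hX
  rw [Matrix.mul_assoc, Matrix.trace_mul_comm]
  exact psd_trace_nonneg' (by simpa [Matrix.mul_assoc] using hY.mul_mul_conjTranspose_same B)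

end Helpers


open Matrix

noncomputable section

open scoped Classical in
/-- SR-k update: SR-k(G, A, U) = G if GU = AU, otherwise
G − (G−A)U(Uᵀ(G−A)U)⁻¹Uᵀ(G−A). -/
noncomputable def SRk {d k : ℕ} (G A : Matrix (Fin d) (Fin d) ℝ)
    (U : Matrix (Fin d) (Fin k) ℝ) : Matrix (Fin d) (Fin d) ℝ :=
  if G * U = A * U then G
  else G - (G - A) * U * (Uᵀ * (G - A) * U)⁻¹ * Uᵀ * (G - A)

/-- the greedy SR-k update contracts the trace of the residual by (1 − k/d). -/
theorem stmt_7 {d k : ℕ} (hk1 : 1 ≤ k) (hkd : k < d)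
    (A G : Matrix (Fin d) (Fin d) ℝ)
    (hAsymm : A.IsSymm) (hGsymm : G.IsSymm)
    (hAG : (G - A).PosSemidef)
    (idx : Fin k → Fin d) (hidx : Function.Injective idx)
    (hgreedy : ∀ (l : Fin k) (j : Fin d), j ∉ Set.range idx →
      (G - A) j j ≤ (G - A) (idx l) (idx l))
    (U : Matrix (Fin d) (Fin k) ℝ)
    (hUdef : U = Matrix.of fun p q => if p = idx q then (1 : ℝ) else 0)
    (hgram : G * U = A * U ∨ IsUnit (Uᵀ * (G - A) * U).det) :
    (SRk G A U - A).trace ≤ (1 - (k : ℝ) / d) * (G - A).trace := by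
  have hHsymm : (G - A)ᵀ = G - A := by
    rw [Matrix.transpose_sub, hGsymm, hAsymm]
  have hdiag : ∀ j, 0 ≤ (G - A) j j := psd_diag_nonneg' hAG
  have hd0 : (0 : ℝ) < d := by
    have : 0 < d := lt_of_le_of_lt (Nat.zero_le k) hkd
    exact_mod_cast this
  by_cases hGU : G * U = A * U
  · -- easy branch: the residual has zero trace
    have hH0 : ∀ p : Fin k, (G - A) (idx p) (idx p) = 0 := by
      intro p
      have h1 : (G - A) * U = 0 := by rw [Matrix.sub_mul, hGU, sub_self]
      have h2 : ((G - A) * U) (idx p) p = 0 := by rw [h1]; rfl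
      rw [hUdef] at h2
      simpa [Matrix.mul_apply, Finset.sum_ite_eq] using h2
    have htr : (G - A).trace = 0 := by
      have e0 : (G - A).trace = ∑ j, (G - A) j j := by
        simp [Matrix.trace, Matrix.diag]
      rw [e0]
      apply Finset.sum_eq_zero
      intro j _
      by_cases hj : j ∈ Set.range idx
      · obtain ⟨p, rfl⟩ := hj
        exact hH0 p
      · have h1 := hgreedy ⟨0, hk1⟩ j hj
        have h2 := hdiag j
        have h3 := hH0 ⟨0, hk1⟩
        linarith
    unfold SRk
    rw [if_pos hGU, htr, mul_zero]
  · -- main branch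
    have hdet : IsUnit (Uᵀ * (G - A) * U).det := hgram.resolve_left hGU
    unfold SRk
    rw [if_neg hGU, sub_right_comm]
    set H := G - A with hHdef
    clear_value H
    set M := Uᵀ * H * U with hMdef
    clear_value M
    have hUU : Uᵀ * U = (1 : Matrix (Fin k) (Fin k) ℝ) := by
      rw [hUdef]
      ext p q
      simp [Matrix.mul_apply, Matrix.one_apply, hidx.eq_iff, eq_comm]
    have hMP : M.PosSemidef := by
      rw [hMdef]
      exact hAG.conjTranspose_mul_mul_same U
    have hMinv : M⁻¹.PosSemidef := hMP.inv
    -- the projection P = 1 - U Uᵀ is PSD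
    have hPsymm : (1 - U * Uᵀ)ᵀ = 1 - U * Uᵀ := by
      simp [Matrix.transpose_sub, Matrix.transpose_mul]
    have hPidem : (1 - U * Uᵀ) * (1 - U * Uᵀ) = 1 - U * Uᵀ := by
      have h4 : U * Uᵀ * (U * Uᵀ) = U * Uᵀ := by
        rw [← Matrix.mul_assoc, Matrix.mul_assoc U Uᵀ U, hUU, Matrix.mul_one]
      simp only [Matrix.sub_mul, Matrix.mul_sub, Matrix.one_mul, Matrix.mul_one, h4]
      abel
    have hP : (1 - U * Uᵀ).PosSemidef := by
      refine (fun h => by rw [h]; exact Matrix.posSemidef_conjTranspose_mul_self _) (?_ : 1 - U * Uᵀ = (1 - U * Uᵀ)ᴴ * (1 - U * Uᵀ))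
      calc 1 - U * Uᵀ = (1 - U * Uᵀ) * (1 - U * Uᵀ) := hPidem.symm
        _ = (1 - U * Uᵀ)ᴴ * (1 - U * Uᵀ) := by
            congr 1
            exact hPsymm.symm
    -- D = UᵀH²U − M² is PSD
    have hDeq : (H * U)ᵀ * (1 - U * Uᵀ) * (H * U) = Uᵀ * H * H * U - M * M := by
      rw [Matrix.transpose_mul, hHsymm, Matrix.mul_sub (Uᵀ * H), Matrix.mul_one,
        Matrix.sub_mul]
      congr 1
      · simp only [Matrix.mul_assoc]
      · rw [hMdef]
        simp only [Matrix.mul_assoc]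
    have hD : (Uᵀ * H * H * U - M * M).PosSemidef := by
      rw [← hDeq]
      exact hP.conjTranspose_mul_mul_same (H * U)
    -- trace of the correction term
    have hT : (H * U * M⁻¹ * Uᵀ * H).trace
        = M.trace + (M⁻¹ * (Uᵀ * H * H * U - M * M)).trace := by
      have e1 : H * U * M⁻¹ * Uᵀ * H = (H * U) * (M⁻¹ * Uᵀ * H) := by
        simp only [Matrix.mul_assoc]
      have h5 : M⁻¹ * (Uᵀ * H * H * U - M * M) = M⁻¹ * (Uᵀ * H * H * U) - M := by
        rw [Matrix.mul_sub, ← Matrix.mul_assoc M⁻¹ M M, Matrix.nonsing_inv_mul M hdet,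
          Matrix.one_mul]
      have e2 : M⁻¹ * Uᵀ * H * (H * U) = M + M⁻¹ * (Uᵀ * H * H * U - M * M) := by
        rw [h5]
        have h6 : M + (M⁻¹ * (Uᵀ * H * H * U) - M) = M⁻¹ * (Uᵀ * H * H * U) := by abel
        rw [h6]
        simp only [Matrix.mul_assoc]
      rw [e1, Matrix.trace_mul_comm, e2, Matrix.trace_add]
    have hTge : M.trace ≤ (H * U * M⁻¹ * Uᵀ * H).trace := by
      rw [hT]
      have := psd_trace_mul_nonneg' hMinv hD
      linarith
    -- trace of M equals the sum of the selected diagonal entries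
    have hMdiag : ∀ p : Fin k, M p p = H (idx p) (idx p) := by
      intro p
      rw [hMdef, hUdef]
      simp [Matrix.mul_apply, Finset.sum_ite_eq]
    have htrM : M.trace = ∑ p : Fin k, H (idx p) (idx p) := by
      simp only [Matrix.trace, Matrix.diag]
      exact Finset.sum_congr rfl fun p _ => hMdiag p
    -- greedy selection gives (k/d)·tr H ≤ tr M
    have hS : ∑ j ∈ Finset.image idx Finset.univ, H j j = M.trace := by
      rw [htrM, Finset.sum_image (fun a _ b _ h => hidx h)]
    have hsplit : H.trace = M.trace + ∑ j ∈ (Finset.image idx Finset.univ)ᶜ, H j j := by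
      have e0 : H.trace = ∑ j, H j j := by simp [Matrix.trace, Matrix.diag]
      rw [e0, ← hS]
      exact (Finset.sum_add_sum_compl (Finset.image idx Finset.univ) _).symm
    have hcompl : ∀ j ∈ (Finset.image idx Finset.univ)ᶜ, (k : ℝ) * H j j ≤ M.trace := by
      intro j hj
      have hj' : j ∉ Set.range idx := by
        simp only [Finset.mem_compl, Finset.mem_image, Finset.mem_univ, true_and] at hj
        simpa [Set.range] using hj
      rw [htrM]
      calc (k : ℝ) * H j j = ∑ _p : Fin k, H j j := by
            simp [Finset.sum_const, nsmul_eq_mul]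
        _ ≤ ∑ p : Fin k, H (idx p) (idx p) :=
            Finset.sum_le_sum fun p _ => hgreedy p j hj'
    have hcard : ((Finset.image idx Finset.univ)ᶜ.card : ℝ) = (d : ℝ) - k := by
      rw [Finset.card_compl, Finset.card_image_of_injective _ hidx]
      simp [Nat.cast_sub hkd.le]
    have hcomplsum : (k : ℝ) * ∑ j ∈ (Finset.image idx Finset.univ)ᶜ, H j j
        ≤ ((d : ℝ) - k) * M.trace := by
      rw [Finset.mul_sum, ← hcard]
      calc ∑ j ∈ (Finset.image idx Finset.univ)ᶜ, (k : ℝ) * H j j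
          ≤ ∑ _j ∈ (Finset.image idx Finset.univ)ᶜ, M.trace :=
            Finset.sum_le_sum hcompl
        _ = ((Finset.image idx Finset.univ)ᶜ.card : ℝ) * M.trace := by
            simp [Finset.sum_const, nsmul_eq_mul]
    have key2 : (k : ℝ) * H.trace ≤ (d : ℝ) * M.trace := by
      rw [hsplit]
      nlinarith [hcomplsum]
    have key3 : (k : ℝ) / d * H.trace ≤ M.trace := by
      rw [div_mul_eq_mul_div, div_le_iff₀ hd0]
      linarith [key2]
    -- conclude
    rw [Matrix.trace_sub]
    have e4 : (1 - (k : ℝ) / d) * H.trace = H.trace - (k : ℝ) / d * H.trace := by ring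
    rw [e4]
    linarith [hTge, key3]

end
end

section
/- Let f : ℝ^d → ℝ be twice continuously differentiable, convex (∇²f(x) ⪰ 0 for all x), and M-strongly self-concordant. Let x, x₊ ∈ ℝ^d, set r := ‖x₊ − x‖_{∇²f(x)}, and let B be a symmetric d×d matrix with B ⪰ ∇²f(x). Then (1 + Mr/2)²·B ⪰ ∇²f(x₊). -/
open Matrix

noncomputable section

lemma psd_smul_aux {d : ℕ} {A : Matrix (Fin d) (Fin d) ℝ} (hA : A.PosSemidef)
    {c : ℝ} (hc : 0 ≤ c) : (c • A).PosSemidef := by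
  exact hA.smul hc

/-- if B ⪰ ∇²f(x) then (1 + Mr/2)²·B ⪰ ∇²f(x₊), r = ‖x₊ − x‖_{∇²f(x)}. -/
theorem stmt_9 {d : ℕ} (f : Evec d → ℝ) (M : ℝ)
    (hC2 : ContDiff ℝ 2 f)
    (hconv : ∀ x : Evec d, (hessE f x).PosSemidef)
    (hsc : ∀ x y z w : Evec d,
      ((M * anorm (hessE f z) (y - x)) • hessE f w - (hessE f y - hessE f x)).PosSemidef)
    (x xp : Evec d) (r : ℝ) (hr : r = anorm (hessE f x) (xp - x))
    (B : Matrix (Fin d) (Fin d) ℝ) (hBsymm : B.IsSymm)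
    (hB : (B - hessE f x).PosSemidef) :
    ((1 + M * r / 2) ^ 2 • B - hessE f xp).PosSemidef := by
  have h1 := hsc x xp x x
  rw [← hr] at h1
  have key : (1 + M * r / 2) ^ 2 • B - hessE f xp
      = ((1 + M * r / 2) ^ 2) • (B - hessE f x) + ((M * r / 2) ^ 2) • (hessE f x)
        + ((M * r) • hessE f x - (hessE f xp - hessE f x)) := by
    have : (1 + M * r / 2) ^ 2 = 1 + M * r + (M * r / 2) ^ 2 := by ring
    rw [this]
    module
  rw [key]
  exact ((psd_smul_aux hB (sq_nonneg _)).add (psd_smul_aux (hconv x) (sq_nonneg _))).add h1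

end
end
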